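/- arXiv:2302.03798 — 6 statements merged into one kernel-verified Lean document; each statement's English description precedes it below -/
import Mathlib

section
/- Let k ≥ 2. If w₁, w₂ ∈ ℝ^k − {0} are such that Θ(w₁, w₂) ≥ α and ‖w₁‖/‖w₂‖ ≤ L for some α ∈ [0, π] and L ≥ 1, then ‖w₁ + w₂‖ ≤ (1 − α²/(16L))·‖w₁‖ + ‖w₂‖. -/
/-!
By the law of cosines and the bound `cos θ ≤ 1 - θ² / 8` on `[0, π]`, an angle of at least `α`
costs `α² ‖w₁‖ ‖w₂‖ / 4` in `‖w₁ + w₂‖²` compared with `(‖w₁‖ + ‖w₂‖)²`. Shrinking the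
coefficient of `‖w₁‖` by `ε = α² / (16 L)` costs at most `2ε‖w₁‖² + 2ε‖w₁‖‖w₂‖` in the square, and
`‖w₁‖ ≤ L ‖w₂‖` bounds both terms by `α² ‖w₁‖ ‖w₂‖ / 8`.
-/

open InnerProductGeometry

lemma Real.cos_le_one_sub_sq_div_eight {x : ℝ} (hx : |x| ≤ Real.pi) :
    Real.cos x ≤ 1 - x ^ 2 / 8 := by
  have hπ : Real.pi ^ 2 ≤ 16 := by nlinarith [Real.pi_pos, Real.pi_lt_four]
  have : x ^ 2 / 8 ≤ 2 / Real.pi ^ 2 * x ^ 2 := by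
    rw [div_mul_eq_mul_div, le_div_iff₀ (by positivity)]
    nlinarith [sq_nonneg x]
  linarith [Real.cos_le_one_sub_mul_cos_sq hx]

lemma add_sq_le_sq_of_le_mul (a b α L : ℝ) (ha : 0 ≤ a) (hb : 0 ≤ b) (hL : 1 ≤ L)
    (hab : a ≤ L * b) :
    a ^ 2 + 2 * ((1 - α ^ 2 / 8) * (a * b)) + b ^ 2 ≤ ((1 - α ^ 2 / (16 * L)) * a + b) ^ 2 := by
  set ε := α ^ 2 / (16 * L) with hε
  have hεL : ε * L = α ^ 2 / 16 := by rw [hε]; field_simp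
  have hε0 : 0 ≤ ε := by positivity
  have hab' : 0 ≤ a * b := mul_nonneg ha hb
  have hεa : ε * a ^ 2 ≤ α ^ 2 / 16 * (a * b) := by
    rw [← hεL]
    nlinarith [mul_le_mul_of_nonneg_left hab (mul_nonneg hε0 ha)]
  have hεb : ε * (a * b) ≤ α ^ 2 / 16 * (a * b) := by
    rw [← hεL]
    nlinarith [mul_le_mul_of_nonneg_left hL (mul_nonneg hε0 hab')]
  nlinarith [sq_nonneg (ε * a)]

variable {V : Type*} [NormedAddCommGroup V] [InnerProductSpace ℝ V]

lemma inner_le_one_sub_sq_div_eight_mul {x y : V} {α : ℝ} (hα : 0 ≤ α) (hangle : α ≤ angle x y) :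
    inner ℝ x y ≤ (1 - α ^ 2 / 8) * (‖x‖ * ‖y‖) := by
  rw [← cos_angle_mul_norm_mul_norm]
  have hcos : Real.cos (angle x y) ≤ 1 - α ^ 2 / 8 := by
    have hθ : |angle x y| ≤ Real.pi := by rw [abs_of_nonneg (angle_nonneg x y)]; exact angle_le_pi x y
    nlinarith [Real.cos_le_one_sub_sq_div_eight hθ]
  exact mul_le_mul_of_nonneg_right hcos (by positivity)

lemma norm_add_le_of_le_angle {x y : V} {α L : ℝ} (hα : 0 ≤ α) (hL : 1 ≤ L)
    (hangle : α ≤ angle x y) (hxy : ‖x‖ ≤ L * ‖y‖) :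
    ‖x + y‖ ≤ (1 - α ^ 2 / (16 * L)) * ‖x‖ + ‖y‖ := by
  have hαπ : α ≤ Real.pi := hangle.trans (angle_le_pi x y)
  have hε : α ^ 2 / (16 * L) ≤ 1 := by
    rw [div_le_one (by positivity)]
    nlinarith [Real.pi_lt_four]
  have hrhs : 0 ≤ (1 - α ^ 2 / (16 * L)) * ‖x‖ + ‖y‖ := by
    have := mul_nonneg (sub_nonneg.mpr hε) (norm_nonneg x)
    positivity
  refine le_of_pow_le_pow_left₀ two_ne_zero hrhs ?_
  calc ‖x + y‖ ^ 2 = ‖x‖ ^ 2 + 2 * inner ℝ x y + ‖y‖ ^ 2 := norm_add_sq_real x y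
    _ ≤ ‖x‖ ^ 2 + 2 * ((1 - α ^ 2 / 8) * (‖x‖ * ‖y‖)) + ‖y‖ ^ 2 := by
      gcongr
      exact inner_le_one_sub_sq_div_eight_mul hα hangle
    _ ≤ _ := add_sq_le_sq_of_le_mul _ _ α L (norm_nonneg x) (norm_nonneg y) hL hxy

theorem strong_triangle_inequality_general
    (k : ℕ)
    (w₁ w₂ : EuclideanSpace ℝ (Fin k)) (h₂ : w₂ ≠ 0)
    (α L : ℝ) (hα0 : 0 ≤ α) (hL : 1 ≤ L)
    (hangle : α ≤ InnerProductGeometry.angle w₁ w₂)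
    (hnorm : ‖w₁‖ / ‖w₂‖ ≤ L) :
    ‖w₁ + w₂‖ ≤ (1 - α ^ 2 / (16 * L)) * ‖w₁‖ + ‖w₂‖ :=
  norm_add_le_of_le_angle hα0 hL hangle <| (div_le_iff₀ (norm_pos_iff.mpr h₂)).mp hnorm

/-- **Strong triangle inequality.** If two nonzero vectors in `ℝ^k` make an angle at
least `α` and their norm ratio is at most `L`, then
`‖w₁ + w₂‖ ≤ (1 − α²/(16L))·‖w₁‖ + ‖w₂‖`. -/
theorem strong_triangle_inequality
    (k : ℕ) (hk : 2 ≤ k)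
    (w₁ w₂ : EuclideanSpace ℝ (Fin k)) (h₁ : w₁ ≠ 0) (h₂ : w₂ ≠ 0)
    (α L : ℝ) (hα0 : 0 ≤ α) (hαπ : α ≤ Real.pi) (hL : 1 ≤ L)
    (hangle : α ≤ InnerProductGeometry.angle w₁ w₂)
    (hnorm : ‖w₁‖ / ‖w₂‖ ≤ L) :
    ‖w₁ + w₂‖ ≤ (1 - α ^ 2 / (16 * L)) * ‖w₁‖ + ‖w₂‖ :=
  strong_triangle_inequality_general k w₁ w₂ h₂ α L hα0 hL hangle hnorm
end

section
/- Let V be a real inner product space and let u, v ∈ V be nonzero vectors. Then sin(Θ(u, v)) ≤ ‖u − v‖ / max(‖u‖, ‖v‖). -/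
namespace InnerProductGeometry

variable {V : Type*} [NormedAddCommGroup V] [InnerProductSpace ℝ V]

theorem sin_angle_mul_norm_le_norm_sub (x y : V) :
    Real.sin (angle x y) * ‖x‖ ≤ ‖x - y‖ := by
  rw [sin_angle_mul_norm_eq_sin_angle_mul_norm]
  exact mul_le_of_le_one_left (norm_nonneg _) (Real.sin_le_one _)

theorem sin_angle_mul_max_norm_le_norm_sub (x y : V) :
    Real.sin (angle x y) * max ‖x‖ ‖y‖ ≤ ‖x - y‖ := by
  rw [mul_max_of_nonneg _ _ (sin_angle_nonneg x y)]
  refine max_le (sin_angle_mul_norm_le_norm_sub x y) ?_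
  rw [angle_comm, norm_sub_rev]
  exact sin_angle_mul_norm_le_norm_sub y x

end InnerProductGeometry

theorem sin_angle_le_dist_div_max_norm_general
    {V : Type*} [NormedAddCommGroup V] [InnerProductSpace ℝ V]
    (u v : V) (hu : u ≠ 0) :
    Real.sin (InnerProductGeometry.angle u v) ≤ ‖u - v‖ / max ‖u‖ ‖v‖ := by
  rw [le_div_iff₀ (lt_max_of_lt_left (norm_pos_iff.mpr hu))]
  exact InnerProductGeometry.sin_angle_mul_max_norm_le_norm_sub u v

/-- **Sine law estimate.** For nonzero vectors `u, v` in a real inner product space,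
`sin(Θ(u, v)) ≤ ‖u − v‖ / max(‖u‖, ‖v‖)`. -/
theorem sin_angle_le_dist_div_max_norm
    {V : Type*} [NormedAddCommGroup V] [InnerProductSpace ℝ V]
    (u v : V) (hu : u ≠ 0) (hv : v ≠ 0) :
    Real.sin (InnerProductGeometry.angle u v) ≤ ‖u - v‖ / max ‖u‖ ‖v‖ :=
  sin_angle_le_dist_div_max_norm_general u v hu
end

section
/- For every open set U ⊆ ℝ^d with μ(U ∩ Δ₀) > 0 there exists m₀ ∈ ℕ such that for every integer m ≥ m₀ there is a word w of length m with f_w(Δ₀) ⊆ U. -/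
open MeasureTheory

/-- `wordMap f w` is the composition `f_{j₁} ∘ ⋯ ∘ f_{j_n}` for the word `w = (j₁, …, j_n)`.
The sets `wordMap f w '' Δ₀` are the cylinders. -/
def wordMap {J E : Type*} (f : J → E → E) : List J → E → E
  | [] => id
  | j :: w => f j ∘ wordMap f w

/-!
A cylinder of length `m` has diameter at most `λ^m diam Δ₀`. Since `U` is open and
`μ(U ∩ Δ₀) > 0`, for some `ε > 0` the set `A = {x | ball x ε ⊆ U}`, the complement of the
`ε`-thickening of `Uᶜ`, still has `μ(A ∩ Δ₀) > 0`. The cylinders of length `m` cover `Δ₀` up to a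
null set, so one of them meets `A`; once `λ^m diam Δ₀ < ε` that cylinder lies in `U`.
-/

open Metric Set Filter

section WordMap

variable {J E : Type*} {f : J → E → E} {s : Set E}

theorem mapsTo_wordMap (hmaps : ∀ j, MapsTo (f j) s s) (w : List J) :
    MapsTo (wordMap f w) s s := by
  induction w with
  | nil => exact mapsTo_id s
  | cons j w ih => exact (hmaps j).comp ih

variable [PseudoMetricSpace E] {K : ℝ}

theorem dist_wordMap_le (hK : 0 ≤ K) (hmaps : ∀ j, MapsTo (f j) s s)
    (hlip : ∀ j, ∀ x ∈ s, ∀ y ∈ s, dist (f j x) (f j y) ≤ K * dist x y) (w : List J)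
    {x y : E} (hx : x ∈ s) (hy : y ∈ s) :
    dist (wordMap f w x) (wordMap f w y) ≤ K ^ w.length * dist x y := by
  induction w with
  | nil => simp [wordMap]
  | cons j w ih =>
    calc dist (f j (wordMap f w x)) (f j (wordMap f w y))
        ≤ K * dist (wordMap f w x) (wordMap f w y) :=
          hlip j _ (mapsTo_wordMap hmaps w hx) _ (mapsTo_wordMap hmaps w hy)
      _ ≤ K * (K ^ w.length * dist x y) := mul_le_mul_of_nonneg_left ih hK
      _ = K ^ (j :: w).length * dist x y := by rw [List.length_cons, pow_succ]; ring

theorem image_wordMap_subset_closedBall (hK : 0 ≤ K) (hmaps : ∀ j, MapsTo (f j) s s)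
    (hlip : ∀ j, ∀ x ∈ s, ∀ y ∈ s, dist (f j x) (f j y) ≤ K * dist x y)
    (hs : Bornology.IsBounded s) (w : List J) {x : E} (hx : x ∈ s) :
    wordMap f w '' s ⊆ closedBall (wordMap f w x) (K ^ w.length * diam s) := by
  rintro _ ⟨y, hy, rfl⟩
  calc dist (wordMap f w y) (wordMap f w x) ≤ K ^ w.length * dist y x :=
        dist_wordMap_le hK hmaps hlip w hy hx
    _ ≤ K ^ w.length * diam s :=
        mul_le_mul_of_nonneg_left (dist_le_diam_of_mem hs hy hx) (pow_nonneg hK _)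

end WordMap

section Thickening

variable {α : Type*} [PseudoMetricSpace α] {U : Set α}

theorem ball_subset_of_notMem_thickening_compl {x : α} {δ : ℝ} (hx : x ∉ thickening δ Uᶜ) :
    ball x δ ⊆ U := fun y hy => by
  by_contra hyU
  exact hx (ball_subset_thickening hyU δ (mem_ball_comm.1 hy))

theorem IsOpen.subset_iUnion_compl_thickening_compl (hU : IsOpen U) :
    U ⊆ ⋃ n : ℕ, (thickening (1 / (n + 1)) Uᶜ)ᶜ := fun x hx => by
  have hxc : x ∉ closure Uᶜ := by rwa [hU.isClosed_compl.closure_eq, notMem_compl_iff]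
  obtain ⟨n, hn⟩ := ((tendsto_one_div_add_atTop_nhds_zero_nat).eventually
    (eventually_notMem_thickening_of_infEDist_pos hxc)).exists
  exact mem_iUnion.2 ⟨n, hn⟩

theorem IsOpen.exists_measure_compl_thickening_compl_inter_ne_zero [MeasurableSpace α]
    {μ : Measure α} {s : Set α} (hU : IsOpen U) (h : μ (U ∩ s) ≠ 0) :
    ∃ ε > 0, μ ((thickening ε Uᶜ)ᶜ ∩ s) ≠ 0 := by
  by_contra! hnull
  refine h (measure_mono_null ?_ (measure_iUnion_null fun n : ℕ =>
    hnull (1 / (n + 1)) Nat.one_div_pos_of_nat))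
  rw [← iUnion_inter]
  exact inter_subset_inter_left s hU.subset_iUnion_compl_thickening_compl

end Thickening

theorem MeasureTheory.Measure.inter_nonempty_of_measure_eq {α : Type*} [MeasurableSpace α]
    {μ : Measure α} {s S A : Set α} (hSs : S ⊆ s) (hμS : μ S = μ s) (hs : μ s ≠ ⊤)
    (hA : MeasurableSet A) (hAs : μ (A ∩ s) ≠ 0) : (S ∩ A).Nonempty := by
  by_contra hempty
  have hS_diff : S ⊆ s \ A := fun x hx => ⟨hSs hx, fun hxA => hempty ⟨x, hx, hxA⟩⟩
  have hsplit : μ (s ∩ A) + μ (s \ A) ≤ 0 + μ (s \ A) := by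
    rw [measure_inter_add_sdiff s hA, zero_add, ← hμS]
    exact measure_mono hS_diff
  rw [inter_comm] at hAs
  exact hAs (nonpos_iff_eq_zero.1 <| (ENNReal.add_le_add_iff_right
    (measure_ne_top_of_subset sdiff_subset hs)).1 hsplit)

theorem cylinder_in_open_set_general
    {d : ℕ} {J : Type*}
    (Δ₀ : Set (EuclideanSpace ℝ (Fin d)))
    (hbdd : Bornology.IsBounded Δ₀)
    (lam : ℝ) (hlam0 : 0 < lam) (hlam1 : lam < 1)
    (f : J → EuclideanSpace ℝ (Fin d) → EuclideanSpace ℝ (Fin d))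
    (hmaps : ∀ j, Set.MapsTo (f j) Δ₀ Δ₀)
    (hlip : ∀ j, ∀ x ∈ Δ₀, ∀ y ∈ Δ₀, dist (f j x) (f j y) ≤ lam * dist x y)
    (μ : Measure (EuclideanSpace ℝ (Fin d))) [IsFiniteMeasure μ]
    (hfull : ∀ n : ℕ, 1 ≤ n →
      μ (⋃ w ∈ {w : List J | w.length = n}, wordMap f w '' Δ₀) = μ Δ₀)
    (U : Set (EuclideanSpace ℝ (Fin d))) (hU : IsOpen U) (hUμ : 0 < μ (U ∩ Δ₀)) :
    ∃ m₀ : ℕ, ∀ m : ℕ, m₀ ≤ m → ∃ w : List J, w.length = m ∧ wordMap f w '' Δ₀ ⊆ U := by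
  obtain ⟨ε, hε, hA⟩ := hU.exists_measure_compl_thickening_compl_inter_ne_zero hUμ.ne'
  obtain ⟨m₀, hm₀⟩ := eventually_atTop.1 <|
    ((tendsto_pow_atTop_nhds_zero_of_lt_one hlam0.le hlam1).mul_const (diam Δ₀)
      |>.eventually_lt_const (by simpa using hε))
  refine ⟨max m₀ 1, fun m hm => ?_⟩
  have hcover : (⋃ w ∈ {w : List J | w.length = m}, wordMap f w '' Δ₀) ⊆ Δ₀ :=
    iUnion₂_subset fun w _ => (mapsTo_wordMap hmaps w).image_subset
  obtain ⟨_, hz, hzA⟩ := Measure.inter_nonempty_of_measure_eq hcover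
    (hfull m (le_of_max_le_right hm)) (measure_ne_top μ Δ₀)
    isOpen_thickening.measurableSet.compl hA
  obtain ⟨w, hw, x, hx, rfl⟩ := mem_iUnion₂.1 hz
  refine ⟨w, hw, (image_wordMap_subset_closedBall hlam0.le hmaps hlip hbdd w hx).trans ?_⟩
  rw [hw]
  exact (closedBall_subset_ball (hm₀ m (le_of_max_le_left hm))).trans
    (ball_subset_of_notMem_thickening_compl hzA)

/-- **Cylinders inside open sets.** In the countable contracting iterated function system
setting, for every open set `U` with `μ(U ∩ Δ₀) > 0` there exists `m₀` such that for every
`m ≥ m₀` some cylinder of length `m` is contained in `U`. -/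
theorem cylinder_in_open_set
    {d : ℕ} (hd : 1 ≤ d) {J : Type*} [Countable J]
    (Δ₀ : Set (EuclideanSpace ℝ (Fin d)))
    (hne : Δ₀.Nonempty) (hbdd : Bornology.IsBounded Δ₀) (hopen : IsOpen Δ₀)
    (lam : ℝ) (hlam0 : 0 < lam) (hlam1 : lam < 1)
    (f : J → EuclideanSpace ℝ (Fin d) → EuclideanSpace ℝ (Fin d))
    (hmaps : ∀ j, Set.MapsTo (f j) Δ₀ Δ₀)
    (hlip : ∀ j, ∀ x ∈ Δ₀, ∀ y ∈ Δ₀, dist (f j x) (f j y) ≤ lam * dist x y)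
    (μ : Measure (EuclideanSpace ℝ (Fin d))) [IsFiniteMeasure μ]
    (hμne : μ ≠ 0) (hμsupp : μ Δ₀ᶜ = 0)
    (hdisj : ∀ n : ℕ, 1 ≤ n → ∀ w w' : List J, w.length = n → w'.length = n → w ≠ w' →
      Disjoint (wordMap f w '' Δ₀) (wordMap f w' '' Δ₀))
    (hfull : ∀ n : ℕ, 1 ≤ n →
      μ (⋃ w ∈ {w : List J | w.length = n}, wordMap f w '' Δ₀) = μ Δ₀)
    (U : Set (EuclideanSpace ℝ (Fin d))) (hU : IsOpen U) (hUμ : 0 < μ (U ∩ Δ₀)) :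
    ∃ m₀ : ℕ, ∀ m : ℕ, m₀ ≤ m → ∃ w : List J, w.length = m ∧ wordMap f w '' Δ₀ ⊆ U :=
  cylinder_in_open_set_general Δ₀ hbdd lam hlam0 hlam1 f hmaps hlip μ hfull U hU hUμ
end

section
/- Let h : Λ → ℝ be a bounded positive function and B ≥ 0 a constant such that |h(x) − h(x′)| ≤ B·h(x)·d(x, x′) for all x, x′ ∈ Λ. Define Lh(x) = ∑_{j∈J} e^{φ_j(x)} h(g_j(x)) for x ∈ Λ. Then for all x, x′ ∈ Λ: |Lh(x) − Lh(x′)| ≤ e^{C·d(x,x′)}·(C + B·κ)·Lh(x)·d(x, x′). -/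
/-!
Split each term of `Lh(x) - Lh(x')` as `(e^{φ_j x} - e^{φ_j x'}) h(g_j x) + e^{φ_j x'} (h(g_j x) - h(g_j x'))`.
The potential is `C`-Lipschitz, so the first part is at most `C d e^{C d}` times the `j`-th term of
`Lh(x)`; the contraction turns the hypothesis on `h` into `|h(g_j x) - h(g_j x')| ≤ B κ d h(g_j x)`,
and `e^{φ_j x'} ≤ e^{C d} e^{φ_j x}`. Hence every term of `Lh(x) - Lh(x')` is bounded by
`e^{C d} (C + B κ) d` times the corresponding term of `Lh(x)`, and summing gives the estimate.
-/

open Real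

lemma abs_exp_sub_one_le_mul_exp_abs (y : ℝ) : |exp y - 1| ≤ |y| * exp |y| := by
  rcases le_or_gt 0 y with hy | hy
  · have hexp := mul_le_mul_of_nonneg_left (by linarith [add_one_le_exp (-y)] : 1 - y ≤ exp (-y))
      (exp_pos y).le
    rw [← exp_add, add_neg_cancel, exp_zero] at hexp
    rw [abs_of_nonneg (by linarith [one_le_exp hy]), abs_of_nonneg hy]
    nlinarith
  · rw [abs_of_neg (by linarith [exp_lt_one_iff.2 hy]), abs_of_neg hy]
    nlinarith [add_one_le_exp y, one_le_exp (neg_nonneg.2 hy.le)]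

lemma abs_exp_sub_exp_le {s t r : ℝ} (hst : |s - t| ≤ r) :
    |exp s - exp t| ≤ exp s * (r * exp r) := by
  have hexp : exp s - exp t = -(exp s * (exp (t - s) - 1)) := by
    rw [mul_sub, ← exp_add]; ring_nf
  rw [hexp, abs_neg, abs_mul, abs_of_pos (exp_pos s)]
  have hts : |t - s| ≤ r := abs_sub_comm t s ▸ hst
  gcongr
  exact (abs_exp_sub_one_le_mul_exp_abs _).trans
    (mul_le_mul hts (exp_le_exp.2 hts) (exp_pos _).le ((abs_nonneg _).trans hts))

lemma abs_exp_mul_sub_exp_mul_le {s t u v r ρ : ℝ} (hu : 0 ≤ u)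
    (hst : |s - t| ≤ r) (huv : |u - v| ≤ ρ * u) :
    |exp s * u - exp t * v| ≤ exp r * (r + ρ) * (exp s * u) := by
  have ht : exp t ≤ exp s * exp r := by
    rw [← exp_add]; exact exp_le_exp.2 (by linarith [(abs_le.1 hst).1])
  calc |exp s * u - exp t * v|
      = |(exp s - exp t) * u + exp t * (u - v)| := by ring_nf
    _ ≤ |exp s - exp t| * u + exp t * |u - v| := by
        refine (abs_add_le _ _).trans_eq ?_
        rw [abs_mul, abs_mul, abs_of_nonneg hu, abs_of_pos (exp_pos t)]
    _ ≤ exp s * (r * exp r) * u + exp s * exp r * (ρ * u) := by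
        gcongr
        exact abs_exp_sub_exp_le hst
    _ = exp r * (r + ρ) * (exp s * u) := by ring

lemma abs_tsum_sub_tsum_le_mul_tsum {ι : Type*} {f f' : ι → ℝ} {c : ℝ}
    (hf : Summable f) (hf' : Summable f') (hle : ∀ i, |f i - f' i| ≤ c * f i) :
    |∑' i, f i - ∑' i, f' i| ≤ c * ∑' i, f i := by
  have habs : Summable fun i => |f i - f' i| :=
    .of_nonneg_of_le (fun _ => abs_nonneg _) hle (hf.mul_left c)
  rw [← hf.tsum_sub hf', ← tsum_mul_left]
  calc |∑' i, (f i - f' i)| ≤ ∑' i, |f i - f' i| :=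
        norm_tsum_le_tsum_norm (f := fun i => f i - f' i) habs
    _ ≤ ∑' i, c * f i := habs.tsum_le_tsum hle (hf.mul_left c)

theorem lasota_yorke_scalar_general
    {Λ : Type*} [MetricSpace Λ] {J : Type*}
    (κ C : ℝ)
    (g : J → Λ → Λ) (hg : ∀ j x x', dist (g j x) (g j x') ≤ κ * dist x x')
    (φ : J → Λ → ℝ) (hφ : ∀ j x x', |φ j x - φ j x'| ≤ C * dist x x')
    (hsum : ∀ x, Summable fun j => Real.exp (φ j x))
    (h : Λ → ℝ) (hpos : ∀ x, 0 < h x) (hbdd : ∃ M, ∀ x, h x ≤ M)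
    (B : ℝ) (hB : 0 ≤ B)
    (hLip : ∀ x x', |h x - h x'| ≤ B * h x * dist x x') :
    ∀ x x', |(∑' j, Real.exp (φ j x) * h (g j x)) - (∑' j, Real.exp (φ j x') * h (g j x'))|
      ≤ Real.exp (C * dist x x') * (C + B * κ) *
          (∑' j, Real.exp (φ j x) * h (g j x)) * dist x x' := by
  intro x x'
  obtain ⟨M, hM⟩ := hbdd
  have hLh : ∀ y, Summable fun j => exp (φ j y) * h (g j y) := fun y =>
    .of_norm_bounded ((hsum y).mul_right M) fun j => by
      rw [norm_mul, norm_of_nonneg (exp_pos _).le, norm_of_nonneg (hpos _).le]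
      exact mul_le_mul_of_nonneg_left (hM _) (exp_pos _).le
  have hterm : ∀ j, |h (g j x) - h (g j x')| ≤ B * κ * dist x x' * h (g j x) := fun j =>
    (hLip _ _).trans <| by
      nlinarith [hg j x x', mul_nonneg hB (hpos (g j x)).le]
  rw [mul_right_comm]
  refine abs_tsum_sub_tsum_le_mul_tsum (hLh x) (hLh x') fun j => ?_
  convert abs_exp_mul_sub_exp_mul_le (hpos _).le (hφ j x x') (hterm j) using 2
  ring

/-- **Scalar Lasota–Yorke estimate.** For a countable family of `κ`-contractions `g_j` and
`C`-Lipschitz potentials `φ_j` with `∑_j e^{φ_j(x)} < ∞`, if a bounded positive function `h`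
satisfies `|h(x) − h(x′)| ≤ B·h(x)·d(x,x′)`, then the transfer operator
`Lh(x) = ∑_j e^{φ_j(x)} h(g_j(x))` satisfies
`|Lh(x) − Lh(x′)| ≤ e^{C·d(x,x′)}·(C + B·κ)·Lh(x)·d(x,x′)`. -/
theorem lasota_yorke_scalar
    {Λ : Type*} [MetricSpace Λ] {J : Type*} [Countable J]
    (κ C : ℝ) (hκ0 : 0 ≤ κ) (hκ1 : κ < 1) (hC : 0 ≤ C)
    (g : J → Λ → Λ) (hg : ∀ j x x', dist (g j x) (g j x') ≤ κ * dist x x')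
    (φ : J → Λ → ℝ) (hφ : ∀ j x x', |φ j x - φ j x'| ≤ C * dist x x')
    (hsum : ∀ x, Summable fun j => Real.exp (φ j x))
    (h : Λ → ℝ) (hpos : ∀ x, 0 < h x) (hbdd : ∃ M, ∀ x, h x ≤ M)
    (B : ℝ) (hB : 0 ≤ B)
    (hLip : ∀ x x', |h x - h x'| ≤ B * h x * dist x x') :
    ∀ x x', |(∑' j, Real.exp (φ j x) * h (g j x)) - (∑' j, Real.exp (φ j x') * h (g j x'))|
      ≤ Real.exp (C * dist x x') * (C + B * κ) *
          (∑' j, Real.exp (φ j x) * h (g j x)) * dist x x' :=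
  lasota_yorke_scalar_general κ C g hg φ hφ hsum h hpos hbdd B hB hLip
end

section
/- Let (S, d) be a metric space of diameter at most r > 0, E a normed vector space, and K ≥ 0 a constant with K·r ≤ 1/8. Let h : S → (0, ∞) and H : S → E satisfy, for all x, x′ ∈ S: |h(x) − h(x′)| ≤ K·h(x)·d(x, x′), ‖H(x) − H(x′)‖ ≤ K·h(x)·d(x, x′), and ‖H(x)‖ ≤ h(x). Then: (1) 1/2 ≤ h(x)/h(x′) ≤ 2 for all x, x′ ∈ S; and (2) either ‖H(x)‖ ≤ (3/4)·h(x) for all x ∈ S, or ‖H(x)‖ ≥ (1/4)·h(x) for all x ∈ S. -/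
/-! Since `K · dist ≤ K · r ≤ 1/8`, both `h` and `H` oscillate by at most `h(x)/8` over `S`.
The bound on `h` pins the ratio `h(x)/h(x′)`; and if `‖H(x₀)‖ > (3/4)·h(x₀)` at a single point,
then everywhere `‖H‖ ≥ (5/8)·h(x₀) ≥ (5/9)·h > h/4`. -/

theorem mul_mul_dist_le_div_eight {S : Type*} [PseudoMetricSpace S] {r K c : ℝ} (hK : 0 ≤ K)
    (hc : 0 ≤ c) (hKr : K * r ≤ 1 / 8) {x x' : S} (hdist : dist x x' ≤ r) :
    K * c * dist x x' ≤ c / 8 := by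
  have : K * dist x x' ≤ 1 / 8 := (mul_le_mul_of_nonneg_left hdist hK).trans hKr
  nlinarith

theorem div_mem_Icc_of_abs_sub_le_half {a b : ℝ} (ha : 0 < a) (hab : |a - b| ≤ a / 2) :
    a / b ∈ Set.Icc (1 / 2) 2 := by
  obtain ⟨hlower, hupper⟩ := abs_le.1 hab
  have hb : 0 < b := by linarith
  constructor
  · rw [le_div_iff₀ hb]; linarith
  · rw [div_le_iff₀ hb]; linarith

theorem quarter_mul_le_norm_of_three_quarters_mul_lt_norm {E : Type*} [SeminormedAddCommGroup E]
    {a b : ℝ} {u v : E} (hab : |a - b| ≤ a / 8) (huv : ‖u - v‖ ≤ a / 8) (hu : 3 / 4 * a < ‖u‖) :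
    1 / 4 * b ≤ ‖v‖ := by
  obtain ⟨hlower, hupper⟩ := abs_le.1 hab
  linarith [norm_sub_norm_le u v]

theorem trapping_dichotomy_general
    {S : Type*} [MetricSpace S] {E : Type*} [NormedAddCommGroup E]
    (r K : ℝ) (hK : 0 ≤ K)
    (hdiam : ∀ x x' : S, dist x x' ≤ r) (hKr : K * r ≤ 1 / 8)
    (h : S → ℝ) (hpos : ∀ x, 0 < h x) (H : S → E)
    (hh : ∀ x x', |h x - h x'| ≤ K * h x * dist x x')
    (hH : ∀ x x', ‖H x - H x'‖ ≤ K * h x * dist x x') :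
    (∀ x x', 1 / 2 ≤ h x / h x' ∧ h x / h x' ≤ 2) ∧
      ((∀ x, ‖H x‖ ≤ 3 / 4 * h x) ∨ (∀ x, 1 / 4 * h x ≤ ‖H x‖)) := by
  have hosc : ∀ x x', K * h x * dist x x' ≤ h x / 8 := fun x x' =>
    mul_mul_dist_le_div_eight hK (hpos x).le hKr (hdiam x x')
  refine ⟨fun x x' => div_mem_Icc_of_abs_sub_le_half (hpos x) ?_, ?_⟩
  · linarith [hh x x', hosc x x', hpos x]
  · by_cases hsmall : ∀ x, ‖H x‖ ≤ 3 / 4 * h x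
    · exact Or.inl hsmall
    · obtain ⟨x₀, hx₀⟩ := not_forall.1 hsmall
      exact Or.inr fun x => quarter_mul_le_norm_of_three_quarters_mul_lt_norm
        ((hh x₀ x).trans (hosc x₀ x)) ((hH x₀ x).trans (hosc x₀ x)) (not_le.1 hx₀)

/-- **Trapping dichotomy.** On a metric space of diameter at most `r`, if `h > 0` and `H`
satisfy the Lipschitz bounds `|h(x) − h(x′)| ≤ K·h(x)·d(x,x′)`,
`‖H(x) − H(x′)‖ ≤ K·h(x)·d(x,x′)`, `‖H‖ ≤ h`, and `K·r ≤ 1/8`, then the ratio `h(x)/h(x′)`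
lies in `[1/2, 2]`, and either `‖H‖ ≤ (3/4)h` everywhere or `‖H‖ ≥ (1/4)h` everywhere. -/
theorem trapping_dichotomy
    {S : Type*} [MetricSpace S] {E : Type*} [NormedAddCommGroup E] [NormedSpace ℝ E]
    (r K : ℝ) (hr : 0 < r) (hK : 0 ≤ K)
    (hdiam : ∀ x x' : S, dist x x' ≤ r) (hKr : K * r ≤ 1 / 8)
    (h : S → ℝ) (hpos : ∀ x, 0 < h x) (H : S → E)
    (hh : ∀ x x', |h x - h x'| ≤ K * h x * dist x x')
    (hH : ∀ x x', ‖H x - H x'‖ ≤ K * h x * dist x x')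
    (hHh : ∀ x, ‖H x‖ ≤ h x) :
    (∀ x x', 1 / 2 ≤ h x / h x' ∧ h x / h x' ≤ 2) ∧
      ((∀ x, ‖H x‖ ≤ 3 / 4 * h x) ∨ (∀ x, 1 / 4 * h x ≤ ‖H x‖)) :=
  trapping_dichotomy_general r K hK hdiam hKr h hpos H hh hH
end

section
/- Let (Λ, 𝒜, ν) be a probability space, W a countable set, and for each w ∈ W let γ_w : Λ → Λ be a measurable map and p_w : Λ → [0, ∞) a measurable function with ∑_{w∈W} p_w(x) = 1 for every x ∈ Λ. Define, for bounded nonnegative measurable f : Λ → ℝ, the operator Lf(x) = ∑_{w∈W} p_w(x)·f(γ_w(x)), and assume ∫_Λ Lf dν = ∫_Λ f dν for every bounded nonnegative measurable f. Let S : Λ → Λ be measurable with S(γ_w(x)) = x for all w ∈ W and x ∈ Λ. Let η ∈ (0,1), ζ ≥ 1, κ ∈ (0,1), let (h_n)_{n≥0} be bounded nonnegative measurable functions on Λ and (Ω_n)_{n≥1} measurable subsets of Λ such that for every n ≥ 1: h_n(x)² ≤ η·L(h_{n−1}²)(x) for all x ∈ Ω_n, h_n(x)² ≤ ζ·L(h_{n−1}²)(x)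 for all x ∈ Λ ∖ Ω_n, and ν({x ∈ Λ : #{j : 1 ≤ j ≤ n, S^j(x) ∈ Ω_j} < κ·n}) < 2·e^{−κ·n}. Then for every n ≥ 1: ∫_Λ h_n² dν ≤ ζⁿ·(η^{κn} + 2·e^{−κn})·(sup_{x∈Λ} h₀(x))². -/
/-!
Put `c_j = η` on `Ω_j` and `c_j = ζ` off it. Since `T ∘ γ_w = id`, a factor `φ ∘ T^j` can be
pulled out of `L^j` as `φ`, so the one-step inequalities `h_n² ≤ c_n · L(h_{n-1}²)` iterate to
`h_n² ≤ Lⁿ((∏_{j=1}^n c_j ∘ T^j) · h₀²)`. Integrating against the stationary measure `ν` removes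
`Lⁿ`, leaving `∫ h_n² ≤ (sup h₀)² · ∫ ∏_{j=1}^n c_j ∘ T^j`. The product is at most `ζⁿ` everywhere
and at most `η^{κn} ζⁿ` at every point whose orbit visits `Ω_j` at `κn` or more of the times `j`,
and the large-deviation hypothesis bounds the measure of the remaining points.
-/

open MeasureTheory

section BoundedNonnegMeasurable

variable {Λ : Type*} [MeasurableSpace Λ]

structure BoundedNonnegMeasurable (f : Λ → ℝ) : Prop where
  measurable : Measurable f
  nonneg : ∀ x, 0 ≤ f x
  exists_le : ∃ C, ∀ x, f x ≤ C

namespace BoundedNonnegMeasurable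

variable {f g : Λ → ℝ}

lemma one : BoundedNonnegMeasurable (1 : Λ → ℝ) :=
  ⟨measurable_const, fun _ => zero_le_one, 1, fun _ => le_rfl⟩

lemma mul (hf : BoundedNonnegMeasurable f) (hg : BoundedNonnegMeasurable g) :
    BoundedNonnegMeasurable (f * g) := by
  obtain ⟨C, hC⟩ := hf.exists_le
  obtain ⟨D, hD⟩ := hg.exists_le
  exact ⟨hf.measurable.mul hg.measurable, fun x => mul_nonneg (hf.nonneg x) (hg.nonneg x),
    C * D, fun x => mul_le_mul (hC x) (hD x) (hg.nonneg x) ((hf.nonneg x).trans (hC x))⟩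

lemma sq (hf : BoundedNonnegMeasurable f) : BoundedNonnegMeasurable (fun x => f x ^ 2) := by
  simpa only [pow_two, ← Pi.mul_apply] using hf.mul hf

lemma comp (hf : BoundedNonnegMeasurable f) {T : Λ → Λ} (hT : Measurable T) :
    BoundedNonnegMeasurable (f ∘ T) := by
  obtain ⟨C, hC⟩ := hf.exists_le
  exact ⟨hf.measurable.comp hT, fun x => hf.nonneg (T x), C, fun x => hC (T x)⟩

lemma finset_prod {ι : Type*} (s : Finset ι) {f : ι → Λ → ℝ}
    (hf : ∀ i ∈ s, BoundedNonnegMeasurable (f i)) : BoundedNonnegMeasurable (∏ i ∈ s, f i) :=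
  Finset.prod_induction _ _ (fun _ _ => mul) one hf

lemma integrable (hf : BoundedNonnegMeasurable f) (ν : Measure Λ) [IsFiniteMeasure ν] :
    Integrable f ν := by
  obtain ⟨C, hC⟩ := hf.exists_le
  refine (integrable_const C).mono' hf.measurable.aestronglyMeasurable (ae_of_all _ fun x => ?_)
  rw [Real.norm_of_nonneg (hf.nonneg x)]
  exact hC x

end BoundedNonnegMeasurable

end BoundedNonnegMeasurable

lemma integral_le_add_mul_measureReal {Λ : Type*} [MeasurableSpace Λ] {ν : Measure Λ}
    [IsProbabilityMeasure ν] {f : Λ → ℝ} (hf : Integrable f ν) {s : Set Λ} {a b : ℝ}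
    (ha : 0 ≤ a) (hfb : ∀ x, f x ≤ b) (hfa : ∀ x ∉ s, f x ≤ a) :
    ∫ x, f x ∂ν ≤ a + b * ν.real s := by
  -- `s` need not be measurable; its measurable hull has the same measure.
  set t := toMeasurable ν s
  have ht : MeasurableSet t := measurableSet_toMeasurable ν s
  have hbound x : f x ≤ a + t.indicator (fun _ => b) x := by
    by_cases hx : x ∈ t
    · simpa [hx] using (hfb x).trans (le_add_of_nonneg_left ha)
    · simpa [hx] using hfa x fun hs => hx (subset_toMeasurable ν s hs)
  have hint : Integrable (t.indicator fun _ => b) ν := (integrable_const b).indicator ht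
  calc ∫ x, f x ∂ν ≤ ∫ x, a + t.indicator (fun _ => b) x ∂ν :=
        integral_mono hf ((integrable_const a).add hint) hbound
    _ = a + b * ν.real s := by
        rw [integral_add (integrable_const a) hint, integral_indicator_const b ht]
        simp [t, Measure.real, measure_toMeasurable, mul_comm]

lemma summable_of_tsum_ne_zero {α β : Type*} [AddCommMonoid α] [TopologicalSpace α] {f : β → α}
    (h : ∑' b, f b ≠ 0) : Summable f :=
  not_not.1 fun hs => h (tsum_eq_zero_of_not_summable hs)

section TransferOperator

variable {Λ W : Type*} {p : W → Λ → ℝ} {γ : W → Λ → Λ} {f g : Λ → ℝ} {C : ℝ}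

noncomputable def transferOperator (p : W → Λ → ℝ) (γ : W → Λ → Λ) (f : Λ → ℝ) (x : Λ) : ℝ :=
  ∑' w, p w x * f (γ w x)

lemma summable_transferOperator_terms (hp0 : ∀ w x, 0 ≤ p w x) (hp1 : ∀ x, ∑' w, p w x = 1)
    (hf0 : ∀ y, 0 ≤ f y) (hfC : ∀ y, f y ≤ C) (x : Λ) :
    Summable fun w => p w x * f (γ w x) :=
  .of_nonneg_of_le (fun w => mul_nonneg (hp0 w x) (hf0 _))
    (fun w => mul_le_mul_of_nonneg_left (hfC _) (hp0 w x))
    ((summable_of_tsum_ne_zero (by simp [hp1 x])).mul_right C)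

lemma transferOperator_nonneg (hp0 : ∀ w x, 0 ≤ p w x) (hf0 : ∀ y, 0 ≤ f y) (x : Λ) :
    0 ≤ transferOperator p γ f x :=
  tsum_nonneg fun w => mul_nonneg (hp0 w x) (hf0 _)

lemma transferOperator_mono (hp0 : ∀ w x, 0 ≤ p w x) (hp1 : ∀ x, ∑' w, p w x = 1)
    (hf0 : ∀ y, 0 ≤ f y) (hgC : ∀ y, g y ≤ C) (hfg : ∀ y, f y ≤ g y) (x : Λ) :
    transferOperator p γ f x ≤ transferOperator p γ g x :=
  Summable.tsum_le_tsum (fun w => mul_le_mul_of_nonneg_left (hfg _) (hp0 w x))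
    (summable_transferOperator_terms hp0 hp1 hf0 (fun y => (hfg y).trans (hgC y)) x)
    (summable_transferOperator_terms hp0 hp1 (fun y => (hf0 y).trans (hfg y)) hgC x)

lemma transferOperator_const (hp1 : ∀ x, ∑' w, p w x = 1) (x : Λ) :
    transferOperator p γ (fun _ => C) x = C := by
  rw [transferOperator, tsum_mul_right, hp1 x, one_mul]

lemma transferOperator_le (hp0 : ∀ w x, 0 ≤ p w x) (hp1 : ∀ x, ∑' w, p w x = 1)
    (hf0 : ∀ y, 0 ≤ f y) (hfC : ∀ y, f y ≤ C) (x : Λ) :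
    transferOperator p γ f x ≤ C :=
  (transferOperator_mono hp0 hp1 hf0 (fun _ => le_rfl) hfC x).trans_eq
    (transferOperator_const hp1 x)

lemma transferOperator_comp_mul {T : Λ → Λ} (hTγ : ∀ w x, T (γ w x) = x) (φ g : Λ → ℝ) :
    transferOperator p γ ((φ ∘ T) * g) = φ * transferOperator p γ g := by
  funext x
  simp only [transferOperator, Pi.mul_apply, Function.comp_apply, hTγ, ← tsum_mul_left]
  exact tsum_congr fun w => mul_left_comm _ _ _

lemma transferOperator_iterate_comp_mul {T : Λ → Λ} (hTγ : ∀ w x, T (γ w x) = x) (k : ℕ)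
    (φ g : Λ → ℝ) :
    (transferOperator p γ)^[k] ((φ ∘ T^[k]) * g) = φ * (transferOperator p γ)^[k] g := by
  induction k generalizing φ g with
  | zero => rfl
  | succ k ih =>
    rw [Function.iterate_succ_apply, Function.iterate_succ, ← Function.comp_assoc,
      transferOperator_comp_mul hTγ, ih, Function.iterate_succ_apply]

variable [MeasurableSpace Λ] [Countable W]

lemma measurable_transferOperator (hγ : ∀ w, Measurable (γ w)) (hp : ∀ w, Measurable (p w))
    (hf : Measurable f) : Measurable (transferOperator p γ f) :=
  Measurable.tsum fun w => (hp w).mul (hf.comp (hγ w))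

lemma BoundedNonnegMeasurable.transferOperator_iterate (hγ : ∀ w, Measurable (γ w))
    (hp : ∀ w, Measurable (p w)) (hp0 : ∀ w x, 0 ≤ p w x) (hp1 : ∀ x, ∑' w, p w x = 1)
    (hf : BoundedNonnegMeasurable f) (k : ℕ) :
    BoundedNonnegMeasurable ((transferOperator p γ)^[k] f) := by
  induction k with
  | zero => exact hf
  | succ k ih =>
    obtain ⟨C, hC⟩ := ih.exists_le
    rw [Function.iterate_succ_apply']
    exact ⟨measurable_transferOperator hγ hp ih.measurable, transferOperator_nonneg hp0 ih.nonneg,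
      C, transferOperator_le hp0 hp1 ih.nonneg hC⟩

lemma integral_transferOperator_iterate {ν : Measure Λ} (hγ : ∀ w, Measurable (γ w))
    (hp : ∀ w, Measurable (p w)) (hp0 : ∀ w x, 0 ≤ p w x) (hp1 : ∀ x, ∑' w, p w x = 1)
    (hstat : ∀ f : Λ → ℝ, BoundedNonnegMeasurable f →
      ∫ x, transferOperator p γ f x ∂ν = ∫ x, f x ∂ν)
    (hf : BoundedNonnegMeasurable f) (k : ℕ) :
    ∫ x, (transferOperator p γ)^[k] f x ∂ν = ∫ x, f x ∂ν := by
  induction k with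
  | zero => rfl
  | succ k ih =>
    rw [Function.iterate_succ_apply',
      hstat _ (hf.transferOperator_iterate hγ hp hp0 hp1 k), ih]

end TransferOperator

section BirkhoffProduct

variable {Λ : Type*}

def birkhoffProduct (c : ℕ → Λ → ℝ) (T : Λ → Λ) (n : ℕ) : Λ → ℝ :=
  ∏ j ∈ Finset.Icc 1 n, c j ∘ T^[j]

variable {c : ℕ → Λ → ℝ} {T : Λ → Λ}

@[simp]
lemma birkhoffProduct_zero : birkhoffProduct c T 0 = 1 := by
  simp [birkhoffProduct]

lemma birkhoffProduct_succ (n : ℕ) :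
    birkhoffProduct c T (n + 1) = birkhoffProduct c T n * (c (n + 1) ∘ T^[n + 1]) :=
  Finset.prod_Icc_succ_top (Nat.le_add_left 1 n) _

variable [MeasurableSpace Λ]

lemma BoundedNonnegMeasurable.birkhoffProduct (hc : ∀ j, BoundedNonnegMeasurable (c j))
    (hT : Measurable T) (n : ℕ) : BoundedNonnegMeasurable (birkhoffProduct c T n) :=
  finset_prod _ fun j _ => (hc j).comp (hT.iterate j)

variable {W : Type*} [Countable W] {p : W → Λ → ℝ} {γ : W → Λ → Λ} {h : ℕ → Λ → ℝ}

lemma sq_le_transferOperator_iterate_birkhoffProduct_mul (hγ : ∀ w, Measurable (γ w))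
    (hp : ∀ w, Measurable (p w)) (hp0 : ∀ w x, 0 ≤ p w x) (hp1 : ∀ x, ∑' w, p w x = 1)
    (hT : Measurable T) (hTγ : ∀ w x, T (γ w x) = x) (hc : ∀ j, BoundedNonnegMeasurable (c j))
    (hh0 : BoundedNonnegMeasurable (h 0))
    (hstep : ∀ n x, h (n + 1) x ^ 2 ≤ c (n + 1) x * transferOperator p γ (fun y => h n y ^ 2) x)
    (n : ℕ) (x : Λ) :
    h n x ^ 2 ≤ (transferOperator p γ)^[n] (birkhoffProduct c T n * fun y => h 0 y ^ 2) x := by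
  induction n generalizing x with
  | zero => simp
  | succ n ih =>
    set L := transferOperator p γ
    obtain ⟨C, hC⟩ := (((BoundedNonnegMeasurable.birkhoffProduct hc hT n).mul
      hh0.sq).transferOperator_iterate hγ hp hp0 hp1 n).exists_le
    calc h (n + 1) x ^ 2 ≤ c (n + 1) x * L (fun y => h n y ^ 2) x := hstep n x
      _ ≤ c (n + 1) x * L (L^[n] (birkhoffProduct c T n * fun y => h 0 y ^ 2)) x :=
          mul_le_mul_of_nonneg_left (transferOperator_mono hp0 hp1 (fun _ => sq_nonneg _) hC ih x)
            ((hc _).nonneg x)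
      _ = L^[n + 1] ((c (n + 1) ∘ T^[n + 1]) *
            (birkhoffProduct c T n * fun y => h 0 y ^ 2)) x := by
          rw [transferOperator_iterate_comp_mul hTγ, Pi.mul_apply, Function.iterate_succ_apply']
      _ = L^[n + 1] (birkhoffProduct c T (n + 1) * fun y => h 0 y ^ 2) x := by
          rw [birkhoffProduct_succ, mul_left_comm, mul_assoc]

lemma integral_sq_le_integral_birkhoffProduct_mul_sq_iSup {ν : Measure Λ} [IsFiniteMeasure ν]
    (hγ : ∀ w, Measurable (γ w)) (hp : ∀ w, Measurable (p w)) (hp0 : ∀ w x, 0 ≤ p w x)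
    (hp1 : ∀ x, ∑' w, p w x = 1)
    (hstat : ∀ f : Λ → ℝ, BoundedNonnegMeasurable f →
      ∫ x, transferOperator p γ f x ∂ν = ∫ x, f x ∂ν)
    (hT : Measurable T) (hTγ : ∀ w x, T (γ w x) = x) (hc : ∀ j, BoundedNonnegMeasurable (c j))
    (hh0 : BoundedNonnegMeasurable (h 0))
    (hstep : ∀ n x, h (n + 1) x ^ 2 ≤ c (n + 1) x * transferOperator p γ (fun y => h n y ^ 2) x)
    (n : ℕ) :
    ∫ x, h n x ^ 2 ∂ν ≤ (∫ x, birkhoffProduct c T n x ∂ν) * (⨆ x, h 0 x) ^ 2 := by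
  have hW := BoundedNonnegMeasurable.birkhoffProduct hc hT n
  have hg := hW.mul hh0.sq
  obtain ⟨C, hC⟩ := hh0.exists_le
  have hsup x : h 0 x ^ 2 ≤ (⨆ x, h 0 x) ^ 2 :=
    pow_le_pow_left₀ (hh0.nonneg x) (le_ciSup ⟨C, Set.forall_mem_range.2 hC⟩ x) 2
  calc ∫ x, h n x ^ 2 ∂ν
      ≤ ∫ x, (transferOperator p γ)^[n] (birkhoffProduct c T n * fun y => h 0 y ^ 2) x ∂ν :=
        integral_mono_of_nonneg (ae_of_all _ fun _ => sq_nonneg _)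
          ((hg.transferOperator_iterate hγ hp hp0 hp1 n).integrable ν)
          (ae_of_all _ (sq_le_transferOperator_iterate_birkhoffProduct_mul hγ hp hp0 hp1 hT hTγ hc
            hh0 hstep n))
    _ = ∫ x, birkhoffProduct c T n x * h 0 x ^ 2 ∂ν :=
        integral_transferOperator_iterate hγ hp hp0 hp1 hstat hg n
    _ ≤ ∫ x, birkhoffProduct c T n x * (⨆ x, h 0 x) ^ 2 ∂ν :=
        integral_mono (hg.integrable ν) ((hW.integrable ν).mul_const _)
          fun x => mul_le_mul_of_nonneg_left (hsup x) (hW.nonneg x)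
    _ = (∫ x, birkhoffProduct c T n x ∂ν) * (⨆ x, h 0 x) ^ 2 := integral_mul_const _ _

end BirkhoffProduct

section DolgopyatFactor

open Finset

variable {Λ : Type*} {η ζ : ℝ} {Ω : ℕ → Set Λ}

open scoped Classical in
noncomputable def dolgopyatFactor (η ζ : ℝ) (Ω : ℕ → Set Λ) (j : ℕ) (x : Λ) : ℝ :=
  if x ∈ Ω j then η else ζ

lemma boundedNonnegMeasurable_dolgopyatFactor [MeasurableSpace Λ] (hη : 0 ≤ η) (hηζ : η ≤ ζ)
    {j : ℕ} (hΩ : MeasurableSet (Ω j)) : BoundedNonnegMeasurable (dolgopyatFactor η ζ Ω j) := by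
  refine ⟨Measurable.ite hΩ measurable_const measurable_const, fun x => ?_, ζ, fun x => ?_⟩ <;>
    unfold dolgopyatFactor <;> split_ifs <;> linarith

open scoped Classical in
lemma birkhoffProduct_dolgopyatFactor_apply (T : Λ → Λ) (n : ℕ) (x : Λ) :
    birkhoffProduct (dolgopyatFactor η ζ Ω) T n x =
      η ^ #{j ∈ Icc 1 n | T^[j] x ∈ Ω j} * ζ ^ #{j ∈ Icc 1 n | T^[j] x ∉ Ω j} := by
  rw [birkhoffProduct, prod_apply]
  simp only [Function.comp_apply, dolgopyatFactor]
  rw [prod_ite, prod_const, prod_const]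

lemma birkhoffProduct_dolgopyatFactor_le (hη0 : 0 < η) (hη1 : η ≤ 1) (hζ : 1 ≤ ζ) {T : Λ → Λ}
    {n : ℕ} {x : Λ} {a : ℝ}
    (ha : a ≤ ({j | 1 ≤ j ∧ j ≤ n ∧ T^[j] x ∈ Ω j} : Set ℕ).ncard) :
    birkhoffProduct (dolgopyatFactor η ζ Ω) T n x ≤ η ^ a * ζ ^ n := by
  classical
  have hcard : ({j | 1 ≤ j ∧ j ≤ n ∧ T^[j] x ∈ Ω j} : Set ℕ).ncard
      = #{j ∈ Icc 1 n | T^[j] x ∈ Ω j} := by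
    rw [← Set.ncard_coe_finset]
    congr 1
    ext j
    simp [and_assoc]
  rw [birkhoffProduct_dolgopyatFactor_apply, ← Real.rpow_natCast η]
  refine mul_le_mul ?_ (pow_le_pow_right₀ hζ ?_) (by positivity) (by positivity)
  · exact Real.rpow_le_rpow_of_exponent_ge hη0 hη1 (hcard ▸ ha)
  · simpa using card_filter_le (Icc 1 n) _

lemma integral_birkhoffProduct_dolgopyatFactor_le [MeasurableSpace Λ] {ν : Measure Λ}
    [IsProbabilityMeasure ν] (hη0 : 0 < η) (hη1 : η ≤ 1) (hζ : 1 ≤ ζ)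
    (hΩ : ∀ j, MeasurableSet (Ω j)) {T : Λ → Λ} (hT : Measurable T) (n : ℕ) {a ε : ℝ}
    (hε : ν.real {x | (({j | 1 ≤ j ∧ j ≤ n ∧ T^[j] x ∈ Ω j} : Set ℕ).ncard : ℝ) < a} ≤ ε) :
    ∫ x, birkhoffProduct (dolgopyatFactor η ζ Ω) T n x ∂ν ≤ ζ ^ n * (η ^ a + ε) := by
  have hW := BoundedNonnegMeasurable.birkhoffProduct
    (fun j => boundedNonnegMeasurable_dolgopyatFactor hη0.le (hη1.trans hζ) (hΩ j)) hT n
  calc ∫ x, birkhoffProduct (dolgopyatFactor η ζ Ω) T n x ∂ν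
      ≤ η ^ a * ζ ^ n + ζ ^ n * ν.real {x | (({j | 1 ≤ j ∧ j ≤ n ∧ T^[j] x ∈ Ω j} : Set ℕ).ncard
          : ℝ) < a} :=
        integral_le_add_mul_measureReal (hW.integrable ν) (by positivity)
          (fun x => by
            simpa using birkhoffProduct_dolgopyatFactor_le hη0 hη1 hζ (Nat.cast_nonneg _))
          (fun x hx => birkhoffProduct_dolgopyatFactor_le hη0 hη1 hζ (not_lt.1 hx))
    _ ≤ ζ ^ n * (η ^ a + ε) := by
        rw [mul_add, mul_comm]
        gcongr

end DolgopyatFactor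

theorem l2_bound_from_dolgopyat_method_general
    {Λ : Type*} [MeasurableSpace Λ] (ν : Measure Λ) [IsProbabilityMeasure ν]
    {W : Type*} [Countable W]
    (γ : W → Λ → Λ) (hγ : ∀ w, Measurable (γ w))
    (p : W → Λ → ℝ) (hp : ∀ w, Measurable (p w)) (hp0 : ∀ w x, 0 ≤ p w x)
    (hp1 : ∀ x, ∑' w, p w x = 1)
    (hstat : ∀ f : Λ → ℝ, Measurable f → (∀ x, 0 ≤ f x) → (∃ M, ∀ x, f x ≤ M) →
      ∫ x, (∑' w, p w x * f (γ w x)) ∂ν = ∫ x, f x ∂ν)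
    (T : Λ → Λ) (hT : Measurable T) (hTγ : ∀ w x, T (γ w x) = x)
    (η ζ κ : ℝ) (hη0 : 0 < η) (hη1 : η < 1) (hζ : 1 ≤ ζ)
    (h : ℕ → Λ → ℝ) (hmeas : ∀ n, Measurable (h n)) (hnn : ∀ n x, 0 ≤ h n x)
    (hbdd : ∀ n, ∃ M, ∀ x, h n x ≤ M)
    (Ω : ℕ → Set Λ) (hΩ : ∀ n, MeasurableSet (Ω n))
    (hcontr : ∀ n, 1 ≤ n → ∀ x ∈ Ω n,
      (h n x) ^ 2 ≤ η * ∑' w, p w x * (h (n - 1) (γ w x)) ^ 2)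
    (htriv : ∀ n, 1 ≤ n → ∀ x ∉ Ω n,
      (h n x) ^ 2 ≤ ζ * ∑' w, p w x * (h (n - 1) (γ w x)) ^ 2)
    (hldp : ∀ n : ℕ, 1 ≤ n →
      ν {x | (({j | 1 ≤ j ∧ j ≤ n ∧ T^[j] x ∈ Ω j} : Set ℕ).ncard : ℝ) < κ * n}
        < ENNReal.ofReal (2 * Real.exp (-(κ * n)))) :
    ∀ n : ℕ, 1 ≤ n →
      ∫ x, (h n x) ^ 2 ∂ν
        ≤ ζ ^ n * (η ^ (κ * (n : ℝ)) + 2 * Real.exp (-(κ * n))) * (⨆ x, h 0 x) ^ 2 := by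
  intro n hn
  have hstep : ∀ m x, h (m + 1) x ^ 2
      ≤ dolgopyatFactor η ζ Ω (m + 1) x * transferOperator p γ (fun y => h m y ^ 2) x := by
    intro m x
    by_cases hx : x ∈ Ω (m + 1)
    · simpa [dolgopyatFactor, hx, transferOperator] using hcontr (m + 1) m.succ_pos x hx
    · simpa [dolgopyatFactor, hx, transferOperator] using htriv (m + 1) m.succ_pos x hx
  calc ∫ x, h n x ^ 2 ∂ν
      ≤ (∫ x, birkhoffProduct (dolgopyatFactor η ζ Ω) T n x ∂ν) * (⨆ x, h 0 x) ^ 2 :=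
        integral_sq_le_integral_birkhoffProduct_mul_sq_iSup hγ hp hp0 hp1
          (fun f hf => hstat f hf.measurable hf.nonneg hf.exists_le) hT hTγ
          (fun j => boundedNonnegMeasurable_dolgopyatFactor hη0.le (hη1.le.trans hζ) (hΩ j))
          ⟨hmeas 0, hnn 0, hbdd 0⟩ hstep n
    _ ≤ _ := by
        gcongr
        exact integral_birkhoffProduct_dolgopyatFactor_le hη0 hη1.le hζ hΩ hT n
          (ENNReal.toReal_le_of_le_ofReal (by positivity) (hldp n hn).le)

/-- **L² spectral bound from the Dolgopyat-type properties.** Let `L` be a normalized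
countable-branch transfer operator `Lf(x) = ∑_w p_w(x)·f(γ_w(x))` whose branches `γ_w` are
right inverses of the expanding map `T`, and let `ν` be an `L`-stationary probability
measure. If functions `h_n` satisfy the contraction `h_n² ≤ η·L(h_{n−1}²)` on sets `Ω_n`
and only `h_n² ≤ ζ·L(h_{n−1}²)` elsewhere, and the sets `Ω_n` satisfy a large deviation
property along `T`, then `∫ h_n² dν ≤ ζⁿ·(η^{κn} + 2e^{−κn})·(sup h₀)²`. -/
theorem l2_bound_from_dolgopyat_method
    {Λ : Type*} [MeasurableSpace Λ] (ν : Measure Λ) [IsProbabilityMeasure ν]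
    {W : Type*} [Countable W]
    (γ : W → Λ → Λ) (hγ : ∀ w, Measurable (γ w))
    (p : W → Λ → ℝ) (hp : ∀ w, Measurable (p w)) (hp0 : ∀ w x, 0 ≤ p w x)
    (hp1 : ∀ x, ∑' w, p w x = 1)
    (hstat : ∀ f : Λ → ℝ, Measurable f → (∀ x, 0 ≤ f x) → (∃ M, ∀ x, f x ≤ M) →
      ∫ x, (∑' w, p w x * f (γ w x)) ∂ν = ∫ x, f x ∂ν)
    (T : Λ → Λ) (hT : Measurable T) (hTγ : ∀ w x, T (γ w x) = x)
    (η ζ κ : ℝ) (hη0 : 0 < η) (hη1 : η < 1) (hζ : 1 ≤ ζ) (hκ0 : 0 < κ) (hκ1 : κ < 1)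
    (h : ℕ → Λ → ℝ) (hmeas : ∀ n, Measurable (h n)) (hnn : ∀ n x, 0 ≤ h n x)
    (hbdd : ∀ n, ∃ M, ∀ x, h n x ≤ M)
    (Ω : ℕ → Set Λ) (hΩ : ∀ n, MeasurableSet (Ω n))
    (hcontr : ∀ n, 1 ≤ n → ∀ x ∈ Ω n,
      (h n x) ^ 2 ≤ η * ∑' w, p w x * (h (n - 1) (γ w x)) ^ 2)
    (htriv : ∀ n, 1 ≤ n → ∀ x ∉ Ω n,
      (h n x) ^ 2 ≤ ζ * ∑' w, p w x * (h (n - 1) (γ w x)) ^ 2)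
    (hldp : ∀ n : ℕ, 1 ≤ n →
      ν {x | (({j | 1 ≤ j ∧ j ≤ n ∧ T^[j] x ∈ Ω j} : Set ℕ).ncard : ℝ) < κ * n}
        < ENNReal.ofReal (2 * Real.exp (-(κ * n)))) :
    ∀ n : ℕ, 1 ≤ n →
      ∫ x, (h n x) ^ 2 ∂ν
        ≤ ζ ^ n * (η ^ (κ * (n : ℝ)) + 2 * Real.exp (-(κ * n))) * (⨆ x, h 0 x) ^ 2 :=
  l2_bound_from_dolgopyat_method_general ν γ hγ p hp hp0 hp1 hstat T hT hTγ η ζ κ hη0 hη1 hζ h hmeas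
    hnn hbdd Ω hΩ hcontr htriv hldp
end
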